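/- arXiv:2012.15313 — 4 statements merged into one kernel-verified Lean document; each statement's English description precedes it below -/
import Mathlib

section
/- Let a ∈ ℝ^K with a_k ≥ 0 and ∑_k a_k = 1, and let 0 < λ < 1/K. For δ > 0, let z^δ be a minimizer of -∑_k a_k log(z_k) + λ ∑_k log(δ + z_k) over the simplex {z : z ≥ 0, ∑_k z_k = 1}. Then as δ → 0, z^δ converges to z^0 where z^0_k = (a_k - λ)_+ / ∑_j (a_j - λ)_+. -/
/-!
Write the objective as `∑ₖ f(aₖ, yₖ)` with `f(a, y) = -a log y + λ log (δ + y)`, and let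
`p` be the soft-thresholding point and `S = ∑ⱼ (aⱼ - λ)₊`. When `a ≤ λ`, Gibbs' inequality
bounds `f(a, ·)` below by its infimum `(λ - a) log δ + c(a, λ)`; when `a > λ`,
`f(a, y) ≥ (λ - a) log y = (λ - a) log p + S p log (p / y)`, and `p log (p / y) ≥ 2 (p - √(p y))`.
Summed over a feasible `y`, this says that the objective exceeds an explicit baseline by at least
`S ∑ₖ (√pₖ - √yₖ)²`. The trial point that rescales `p` by `1 - o(1)` on its support and puts
the minimiser of `f(aₖ, ·)` (or `√δ` when `aₖ = λ`) off it comes within `o(1)` of the baseline,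
so minimality forces the Hellinger distance from `z δ` to `p` to `0`.
-/

open Filter Finset Real Topology

namespace Real

theorem sub_le_mul_log_sub_log {u v : ℝ} (hu : 0 ≤ u) (hv : 0 < v) :
    u - v ≤ u * (log u - log v) := by
  rcases hu.eq_or_lt with rfl | hu
  · simpa using hv.le
  have h := log_le_sub_one_of_pos (div_pos hv hu)
  rw [log_div hv.ne' hu.ne', le_sub_iff_add_le, le_div_iff₀ hu] at h
  nlinarith

theorem two_mul_sub_sqrt_mul_sqrt_le_mul_log_sub_log {p y : ℝ} (hp : 0 ≤ p) (hy : 0 < y) :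
    2 * (p - √p * √y) ≤ p * (log p - log y) := by
  rcases hp.eq_or_lt with rfl | hp
  · simp
  have h := sub_le_mul_log_sub_log (sqrt_nonneg p) (sqrt_pos.2 hy)
  rw [log_sqrt hp.le, log_sqrt hy.le] at h
  have h' := mul_le_mul_of_nonneg_left h (by positivity : (0:ℝ) ≤ 2 * √p)
  linear_combination h' + (log p - log y - 2) * mul_self_sqrt hp.le

end Real

noncomputable def penaltyTerm (a lam δ y : ℝ) : ℝ := -(a * log y) + lam * log (δ + y)

/-- The infimum of `penaltyTerm a lam δ` over `y > 0` when `0 ≤ a ≤ lam`; Lean's `0 * log 0 = 0`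
matches the convention `0 log 0 = 0` at the endpoints. -/
noncomputable def penaltyTermInf (a lam δ : ℝ) : ℝ :=
  (lam - a) * log δ + (lam * log lam - a * log a - (lam - a) * log (lam - a))

theorem penaltyTermInf_le_penaltyTerm {a lam δ y : ℝ} (ha : 0 ≤ a) (hal : a ≤ lam)
    (hδ : 0 < δ) (hy : 0 ≤ y) (hay : a ≠ 0 → 0 < y) :
    penaltyTermInf a lam δ ≤ penaltyTerm a lam δ y := by
  rcases eq_or_ne a 0 with rfl | ha0
  · simpa [penaltyTerm, penaltyTermInf] using
      mul_le_mul_of_nonneg_left (log_le_log hδ (le_add_of_nonneg_right hy)) hal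
  have hy := hay ha0
  have hlam : 0 < lam := (ha.lt_of_ne' ha0).trans_le hal
  have hδy : 0 < δ + y := by positivity
  -- Gibbs' inequality for `(a, λ - a)` against `λ (y, δ) / (δ + y)`
  have h₁ := sub_le_mul_log_sub_log ha (show 0 < lam * y / (δ + y) by positivity)
  have h₂ := sub_le_mul_log_sub_log (sub_nonneg.2 hal) (show 0 < lam * δ / (δ + y) by positivity)
  rw [log_div (by positivity) hδy.ne', log_mul hlam.ne' hy.ne'] at h₁
  rw [log_div (by positivity) hδy.ne', log_mul hlam.ne' hδ.ne'] at h₂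
  have hsum : lam * y / (δ + y) + lam * δ / (δ + y) = lam := by field_simp; ring
  unfold penaltyTerm penaltyTermInf
  linarith

theorem penaltyTerm_argmin {a lam δ : ℝ} (ha : 0 ≤ a) (hal : a < lam) (hδ : 0 < δ) :
    penaltyTerm a lam δ (δ * a / (lam - a)) = penaltyTermInf a lam δ := by
  have hla : 0 < lam - a := sub_pos.2 hal
  have hlam : 0 < lam := ha.trans_lt hal
  rcases ha.eq_or_lt with rfl | ha
  · simp [penaltyTerm, penaltyTermInf]
  have hsum : δ + δ * a / (lam - a) = δ * lam / (lam - a) := by field_simp; ring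
  unfold penaltyTerm penaltyTermInf
  rw [hsum, log_div (by positivity) hla.ne', log_div (by positivity) hla.ne',
    log_mul hδ.ne' ha.ne', log_mul hδ.ne' hlam.ne']
  ring

theorem penaltyTerm_self_sqrt {lam δ : ℝ} (hδ : 0 < δ) :
    penaltyTerm lam lam δ √δ = lam * log (√δ + 1) := by
  have hs := sqrt_pos.2 hδ
  have h : δ + √δ = √δ * (√δ + 1) := by rw [mul_add, mul_self_sqrt hδ.le, mul_one]
  rw [penaltyTerm, h, log_mul hs.ne' (by positivity)]
  ring

theorem sub_mul_log_le_penaltyTerm {a lam δ y : ℝ} (hlam : 0 ≤ lam) (hδ : 0 ≤ δ) (hy : 0 < y) :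
    (lam - a) * log y ≤ penaltyTerm a lam δ y := by
  have := mul_le_mul_of_nonneg_left (log_le_log hy (le_add_of_nonneg_left hδ)) hlam
  unfold penaltyTerm
  linarith

/-- Off the support of the limit, the trial point sits at the minimiser of `penaltyTerm a lam δ`,
or at `√δ` when `a = lam`, where the infimum `0` is only approached. -/
noncomputable def offSupport (a lam δ : ℝ) : ℝ := if a = lam then √δ else δ * a / (lam - a)

theorem offSupport_nonneg {a lam δ : ℝ} (ha : 0 ≤ a) (hal : a ≤ lam) (hδ : 0 ≤ δ) :
    0 ≤ offSupport a lam δ := by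
  unfold offSupport
  split_ifs
  · exact sqrt_nonneg δ
  · exact div_nonneg (mul_nonneg hδ ha) (sub_nonneg.2 hal)

theorem offSupport_pos {a lam δ : ℝ} (ha : 0 < a) (hal : a ≤ lam) (hδ : 0 < δ) :
    0 < offSupport a lam δ := by
  unfold offSupport
  split_ifs with h
  · exact sqrt_pos.2 hδ
  · exact div_pos (mul_pos hδ ha) (sub_pos.2 (lt_of_le_of_ne hal h))

theorem tendsto_offSupport (a lam : ℝ) : Tendsto (offSupport a lam) (𝓝 0) (𝓝 0) := by
  have h : Continuous (offSupport a lam) := by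
    unfold offSupport
    split_ifs
    · exact continuous_sqrt
    · fun_prop
  simpa [offSupport] using h.tendsto 0

section

variable {ι : Type*} [Fintype ι]

theorem sum_sq_sqrt_sub_sqrt {p y : ι → ℝ} (hp : ∀ k, 0 ≤ p k) (hy : ∀ k, 0 ≤ y k)
    (hp1 : ∑ k, p k = 1) (hy1 : ∑ k, y k = 1) :
    ∑ k, (√(p k) - √(y k)) ^ 2 = ∑ k, 2 * (p k - √(p k) * √(y k)) := by
  have h : ∀ k, (√(p k) - √(y k)) ^ 2 = 2 * (p k - √(p k) * √(y k)) + (y k - p k) := fun k => by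
    rw [sub_sq, sq_sqrt (hp k), sq_sqrt (hy k)]; ring
  simp only [h, sum_add_distrib, sum_sub_distrib, hp1, hy1, sub_self, add_zero]

theorem tendsto_of_sum_sq_sqrt_sub_le {α : Type*} {l : Filter α} {x : α → ι → ℝ} {p : ι → ℝ}
    {g : α → ℝ} (hp : ∀ k, 0 ≤ p k) (hx : ∀ᶠ t in l, ∀ k, 0 ≤ x t k)
    (hle : ∀ᶠ t in l, ∑ k, (√(p k) - √(x t k)) ^ 2 ≤ g t) (hg : Tendsto g l (𝓝 0)) :
    Tendsto x l (𝓝 p) := by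
  refine tendsto_pi_nhds.2 fun k => ?_
  have hsqrt : Tendsto (fun t => √(x t k)) l (𝓝 √(p k)) := by
    rw [tendsto_iff_norm_sub_tendsto_zero]
    refine squeeze_zero' (.of_forall fun _ => norm_nonneg _) ?_
      (by simpa using (continuous_sqrt.tendsto 0).comp hg)
    filter_upwards [hle] with t ht
    rw [norm_sub_rev, norm_eq_abs, ← sqrt_sq_eq_abs]
    have hk := single_le_sum (fun j _ => sq_nonneg (√(p j) - √(x t j))) (mem_univ k)
    exact sqrt_le_sqrt (hk.trans ht)
  have h := hsqrt.pow 2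
  rw [sq_sqrt (hp k)] at h
  refine h.congr' ?_
  filter_upwards [hx] with t ht using sq_sqrt (ht k)

variable {a : ι → ℝ} {lam : ℝ}

noncomputable def softThreshold (a : ι → ℝ) (lam : ℝ) : ι → ℝ :=
  fun k => max (a k - lam) 0 / ∑ j, max (a j - lam) 0

variable (a lam) in
theorem softThreshold_nonneg (k : ι) : 0 ≤ softThreshold a lam k :=
  div_nonneg (le_max_right _ _) (sum_nonneg fun _ _ => le_max_right _ _)

theorem softThreshold_of_not_lt {k : ι} (h : ¬lam < a k) : softThreshold a lam k = 0 := by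
  simp [softThreshold, max_eq_right (sub_nonpos.2 (not_lt.1 h))]

theorem mul_softThreshold_of_lt (hS : 0 < ∑ j, max (a j - lam) 0) {k : ι} (h : lam < a k) :
    (∑ j, max (a j - lam) 0) * softThreshold a lam k = a k - lam := by
  rw [softThreshold, mul_div_cancel₀ _ hS.ne', max_eq_left (sub_nonneg.2 h.le)]

theorem softThreshold_pos (hS : 0 < ∑ j, max (a j - lam) 0) {k : ι} (h : lam < a k) :
    0 < softThreshold a lam k :=
  div_pos (lt_max_of_lt_left (sub_pos.2 h)) hS

theorem sum_softThreshold (hS : 0 < ∑ j, max (a j - lam) 0) : ∑ k, softThreshold a lam k = 1 := by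
  simp only [softThreshold, ← sum_div, div_self hS.ne']

def simplexPosOnSupport (a : ι → ℝ) : Set (ι → ℝ) :=
  {y | (∀ k, 0 ≤ y k) ∧ (∑ k, y k = 1) ∧ ∀ k, a k ≠ 0 → 0 < y k}

theorem sum_penaltyTerm (δ : ℝ) (y : ι → ℝ) :
    ∑ k, penaltyTerm (a k) lam δ (y k) =
      -(∑ k, a k * log (y k)) + lam * ∑ k, log (δ + y k) := by
  simp only [penaltyTerm, sum_add_distrib, sum_neg_distrib, mul_sum]

noncomputable def penaltyBaseline (a : ι → ℝ) (lam δ : ℝ) : ℝ :=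
  ∑ k, if lam < a k then (lam - a k) * log (softThreshold a lam k) else penaltyTermInf (a k) lam δ

theorem mul_sum_sq_sqrt_sub_le (ha : ∀ k, 0 ≤ a k) (hlam : 0 < lam)
    (hS : 0 < ∑ j, max (a j - lam) 0) {δ : ℝ} (hδ : 0 < δ) {y : ι → ℝ}
    (hy : y ∈ simplexPosOnSupport a) :
    (∑ j, max (a j - lam) 0) * ∑ k, (√(softThreshold a lam k) - √(y k)) ^ 2 ≤
      ∑ k, penaltyTerm (a k) lam δ (y k) - penaltyBaseline a lam δ := by
  obtain ⟨hy0, hy1, hypos⟩ := hy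
  rw [sum_sq_sqrt_sub_sqrt (softThreshold_nonneg a lam) hy0 (sum_softThreshold hS) hy1, mul_sum,
    le_sub_iff_add_le', penaltyBaseline, ← sum_add_distrib]
  refine sum_le_sum fun k _ => ?_
  by_cases hk : lam < a k
  · have hyk := hypos k (hlam.trans hk).ne'
    have hsqrt := two_mul_sub_sqrt_mul_sqrt_le_mul_log_sub_log (softThreshold_nonneg a lam k) hyk
    rw [if_pos hk]
    linear_combination (∑ j, max (a j - lam) 0) * hsqrt +
      sub_mul_log_le_penaltyTerm (a := a k) hlam.le hδ.le hyk +
      (log (softThreshold a lam k) - log (y k)) * mul_softThreshold_of_lt hS hk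
  · rw [if_neg hk, softThreshold_of_not_lt hk]
    simpa using penaltyTermInf_le_penaltyTerm (ha k) (not_lt.1 hk) hδ (hy0 k) (hypos k)

noncomputable def offSupportMass (a : ι → ℝ) (lam δ : ℝ) : ℝ :=
  ∑ k with ¬lam < a k, offSupport (a k) lam δ

variable (a lam) in
theorem tendsto_offSupportMass : Tendsto (offSupportMass a lam) (𝓝 0) (𝓝 0) := by
  have h := tendsto_finsetSum {k | ¬lam < a k} fun k _ => tendsto_offSupport (a k) lam
  rwa [sum_const_zero] at h

noncomputable def trialPoint (a : ι → ℝ) (lam δ : ℝ) : ι → ℝ := fun k =>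
  if lam < a k then (1 - offSupportMass a lam δ) * softThreshold a lam k
  else offSupport (a k) lam δ

theorem trialPoint_mem (ha : ∀ k, 0 ≤ a k) (hS : 0 < ∑ j, max (a j - lam) 0) {δ : ℝ}
    (hδ : 0 < δ) (hV : offSupportMass a lam δ < 1) :
    trialPoint a lam δ ∈ simplexPosOnSupport a := by
  refine ⟨fun k => ?_, ?_, fun k hk => ?_⟩
  · unfold trialPoint
    split_ifs with h
    · exact mul_nonneg (sub_nonneg.2 hV.le) (softThreshold_nonneg a lam k)
    · exact offSupport_nonneg (ha k) (not_lt.1 h) hδ.le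
  · have hP : ∑ k with lam < a k, softThreshold a lam k = 1 := by
      rw [sum_filter_of_ne fun k _ h => not_not.1 fun hk => h (softThreshold_of_not_lt hk),
        sum_softThreshold hS]
    unfold trialPoint
    rw [sum_ite, ← mul_sum, hP, offSupportMass]
    ring
  · unfold trialPoint
    split_ifs with h
    · exact mul_pos (sub_pos.2 hV) (softThreshold_pos hS h)
    · exact offSupport_pos ((ha k).lt_of_ne' hk) (not_lt.1 h) hδ

theorem tendsto_penaltyTerm_trialPoint_sub (ha : ∀ k, 0 ≤ a k)
    (hS : 0 < ∑ j, max (a j - lam) 0) (k : ι) :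
    Tendsto (fun δ => penaltyTerm (a k) lam δ (trialPoint a lam δ k) -
      if lam < a k then (lam - a k) * log (softThreshold a lam k) else penaltyTermInf (a k) lam δ)
      (𝓝[>] 0) (𝓝 0) := by
  by_cases hk : lam < a k
  · simp only [trialPoint, if_pos hk]
    set p := softThreshold a lam k
    have hp : p ≠ 0 := (softThreshold_pos hS hk).ne'
    have hw : Tendsto (fun δ => (1 - offSupportMass a lam δ) * p) (𝓝[>] 0) (𝓝 p) := by
      simpa using (((tendsto_offSupportMass a lam).const_sub 1).mul_const p).mono_left
        nhdsWithin_le_nhds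
    have hδw : Tendsto (fun δ => δ + (1 - offSupportMass a lam δ) * p) (𝓝[>] 0) (𝓝 p) := by
      simpa using (tendsto_id.mono_left nhdsWithin_le_nhds).add hw
    have h : Tendsto (fun δ => penaltyTerm (a k) lam δ ((1 - offSupportMass a lam δ) * p))
        (𝓝[>] 0) (𝓝 (-(a k * log p) + lam * log p)) :=
      ((hw.log hp).const_mul (a k)).neg.add ((hδw.log hp).const_mul lam)
    have h₀ := h.sub_const ((lam - a k) * log p)
    rwa [show -(a k * log p) + lam * log p - (lam - a k) * log p = 0 by ring] at h₀
  rcases (not_lt.1 hk).lt_or_eq with hlt | heq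
  · refine tendsto_const_nhds.congr' ?_
    filter_upwards [self_mem_nhdsWithin] with δ hδ
    simp [trialPoint, hk, offSupport, hlt.ne, penaltyTerm_argmin (ha k) hlt hδ]
  · have h : Tendsto (fun δ => lam * log (√δ + 1)) (𝓝[>] 0) (𝓝 0) := by
      simpa using (((continuous_sqrt.tendsto 0).add_const 1).log (by simp)).const_mul lam
        |>.mono_left nhdsWithin_le_nhds
    refine h.congr' ?_
    filter_upwards [self_mem_nhdsWithin] with δ hδ
    simp [trialPoint, offSupport, heq, penaltyTerm_self_sqrt hδ, penaltyTermInf]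

theorem tendsto_sum_penaltyTerm_trialPoint_sub_baseline (ha : ∀ k, 0 ≤ a k)
    (hS : 0 < ∑ j, max (a j - lam) 0) :
    Tendsto (fun δ => ∑ k, penaltyTerm (a k) lam δ (trialPoint a lam δ k) - penaltyBaseline a lam δ)
      (𝓝[>] 0) (𝓝 0) := by
  simpa [penaltyBaseline, ← sum_sub_distrib] using
    tendsto_finsetSum univ fun k _ => tendsto_penaltyTerm_trialPoint_sub ha hS k

end

/-- For `δ > 0` let `z δ` be a minimizer of
`-∑ a_k log z_k + λ ∑ log (δ + z_k)` over the probability simplex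
(restricted to points where `z_k > 0` whenever `a_k > 0`, since elsewhere the
objective is `+∞`).  Then as `δ → 0⁺`, `z δ` converges to the normalized
soft-thresholding point `z⁰_k = (a_k - λ)_+ / ∑_j (a_j - λ)_+`. -/
theorem log_penalty_soft_thresholding_limit
    (K : ℕ) (hK : 0 < K) (a : Fin K → ℝ) (ha : ∀ k, 0 ≤ a k)
    (hsum : ∑ k, a k = 1) (lam : ℝ) (hlam : 0 < lam) (hlamK : lam < 1 / K)
    (z : ℝ → (Fin K → ℝ))
    (hz : ∀ δ : ℝ, 0 < δ →
      z δ ∈ {y : Fin K → ℝ | (∀ k, 0 ≤ y k) ∧ (∑ k, y k = 1) ∧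
              ∀ k, a k ≠ 0 → 0 < y k} ∧
      IsMinOn
        (fun y : Fin K → ℝ =>
          -(∑ k, a k * Real.log (y k)) + lam * ∑ k, Real.log (δ + y k))
        {y : Fin K → ℝ | (∀ k, 0 ≤ y k) ∧ (∑ k, y k = 1) ∧
          ∀ k, a k ≠ 0 → 0 < y k}
        (z δ)) :
    Tendsto z (nhdsWithin 0 (Set.Ioi 0))
      (nhds (fun k => max (a k - lam) 0 / ∑ j, max (a j - lam) 0)) := by
  have hKlam : ∑ _k : Fin K, lam < ∑ k, a k := by
    rwa [hsum, sum_const, card_univ, Fintype.card_fin, nsmul_eq_mul, ← lt_div_iff₀' (by positivity)]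
  obtain ⟨k₀, -, hk₀⟩ := exists_lt_of_sum_lt hKlam
  have hS : 0 < ∑ j, max (a j - lam) 0 :=
    sum_pos' (fun j _ => le_max_right _ _) ⟨k₀, mem_univ _, lt_max_of_lt_left (sub_pos.2 hk₀)⟩
  have hV : ∀ᶠ δ in 𝓝[>] 0, offSupportMass a lam δ < 1 :=
    ((tendsto_offSupportMass a lam).mono_left nhdsWithin_le_nhds).eventually_lt_const one_pos
  have hgap := (tendsto_sum_penaltyTerm_trialPoint_sub_baseline ha hS).div_const
    (∑ j, max (a j - lam) 0)
  rw [zero_div] at hgap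
  refine tendsto_of_sum_sq_sqrt_sub_le (softThreshold_nonneg a lam) ?_ ?_ hgap
  · filter_upwards [self_mem_nhdsWithin] with δ hδ using (hz δ hδ).1.1
  · filter_upwards [self_mem_nhdsWithin, hV] with δ hδ hVδ
    have hmin := isMinOn_iff.1 (hz δ hδ).2 _ (trialPoint_mem ha hS hδ hVδ)
    simp only [← sum_penaltyTerm] at hmin
    rw [le_div_iff₀' hS]
    exact (mul_sum_sq_sqrt_sub_le ha hlam hS hδ (hz δ hδ).1).trans (sub_le_sub_right hmin _)
end

section
/- Let a ∈ ℝ^K with a_k ≥ 0, ∑_k a_k = 1, 0 < λ < 1/K, and δ > 0. Then the function z ↦ -∑_k a_k log(z_k) + λ ∑_k log(δ + z_k), defined on the relative interior of the probability simplex, attains its minimum at some point of the simplex (i.e., a global minimizer exists). -/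
/-!
On the simplex every term `-a k * log (z k)` is nonnegative, and the one with index `j` exceeds
`c` as soon as `z j < exp (-c / a j)`; the penalty is continuous on the whole compact simplex
because `δ > 0`, so it is bounded below by some `B`. Taking `c = M - B` with `M` the objective
at the feasible point `a`, the objective exceeds `M` outside the compact part of the simplex
where `z k ≥ exp ((B - M) / a k)` for every `k` with `a k ≠ 0`, and its minimum there is global.
-/

open BigOperators

open Real Set

section Coercive

variable {β α : Type*} [TopologicalSpace β] [TopologicalSpace α] [LinearOrder α]
  [ClosedIicTopology α]

theorem exists_isMinOn_of_lt_off_isCompact {f : β → α} {S C : Set β} (hCS : C ⊆ S)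
    (hC : IsCompact C) (hf : ContinuousOn f C) {z₀ : β} (hz₀ : z₀ ∈ S)
    (hout : ∀ y ∈ S, y ∉ C → f z₀ < f y) : ∃ z ∈ S, IsMinOn f S z := by
  have hz₀C : z₀ ∈ C := by_contra fun h => (hout z₀ hz₀ h).false
  obtain ⟨z, hzC, hzmin⟩ := hC.exists_isMinOn ⟨z₀, hz₀C⟩ hf
  refine ⟨z, hCS hzC, fun y hy => ?_⟩
  by_cases hyC : y ∈ C
  · exact hzmin hyC
  · exact (hzmin hz₀C).trans (hout y hy hyC).le

end Coercive

section NegSumMulLog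

variable {ι : Type*} [Fintype ι]

theorem isCompact_stdSimplex_inter_lowerBound (p : ι → Prop) (ε : ι → ℝ) :
    IsCompact (stdSimplex ℝ ι ∩ {y | ∀ k, p k → ε k ≤ y k}) := by
  refine (isCompact_stdSimplex ℝ ι).inter_right ?_
  simp only [ofPred_forall]
  exact isClosed_iInter fun k => isClosed_iInter fun _ =>
    isClosed_le continuous_const (continuous_apply k)

theorem continuousOn_sum_mul_log (a : ι → ℝ) :
    ContinuousOn (fun y : ι → ℝ => ∑ k, a k * log (y k)) {y | ∀ k, a k ≠ 0 → 0 < y k} := by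
  refine continuousOn_finsetSum _ fun k _ => ?_
  by_cases hk : a k = 0
  · simp only [hk, zero_mul]
    exact continuousOn_const
  · exact continuousOn_const.mul <|
      (continuous_apply k).continuousOn.log fun y hy => (hy k hk).ne'

theorem lt_neg_sum_mul_log {a y : ι → ℝ} (ha : ∀ k, 0 ≤ a k) (hy : y ∈ stdSimplex ℝ ι)
    {j : ι} (haj : 0 < a j) (hyj : 0 < y j) {c : ℝ} (hlt : y j < exp (-c / a j)) :
    c < -∑ k, a k * log (y k) := by
  have hterm : ∀ k, 0 ≤ -(a k * log (y k)) := fun k =>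
    neg_nonneg.2 <| mul_nonpos_of_nonneg_of_nonpos (ha k) <|
      log_nonpos (hy.1 k) (mem_Icc_of_mem_stdSimplex hy k).2
  calc c = -(a j * log (exp (-c / a j))) := by rw [log_exp]; field_simp
    _ < -(a j * log (y j)) := by gcongr
    _ ≤ -∑ k, a k * log (y k) := by
      rw [← Finset.sum_neg_distrib]
      exact Finset.single_le_sum (fun k _ => hterm k) (Finset.mem_univ j)

theorem exists_isMinOn_neg_sum_mul_log_add {a : ι → ℝ} (ha : ∀ k, 0 ≤ a k)
    {g : (ι → ℝ) → ℝ} (hg : ContinuousOn g (stdSimplex ℝ ι)) {z₀ : ι → ℝ}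
    (hz₀ : z₀ ∈ stdSimplex ℝ ι ∩ {y | ∀ k, a k ≠ 0 → 0 < y k}) :
    ∃ z ∈ stdSimplex ℝ ι ∩ {y | ∀ k, a k ≠ 0 → 0 < y k},
      IsMinOn (fun y => -(∑ k, a k * log (y k)) + g y)
        (stdSimplex ℝ ι ∩ {y | ∀ k, a k ≠ 0 → 0 < y k}) z := by
  set F : (ι → ℝ) → ℝ := fun y => -(∑ k, a k * log (y k)) + g y
  obtain ⟨B, hB⟩ := (isCompact_stdSimplex ℝ ι).bddBelow_image hg
  set ε : ι → ℝ := fun k => exp (-(F z₀ - B) / a k)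
  refine exists_isMinOn_of_lt_off_isCompact
    (C := stdSimplex ℝ ι ∩ {y | ∀ k, a k ≠ 0 → ε k ≤ y k})
    (fun y hy => ⟨hy.1, fun k hk => (exp_pos _).trans_le (hy.2 k hk)⟩)
    (isCompact_stdSimplex_inter_lowerBound _ ε) ?_ hz₀ ?_
  · exact ((continuousOn_sum_mul_log a).mono fun y hy k hk =>
      (exp_pos _).trans_le (hy.2 k hk)).neg.add (hg.mono inter_subset_left)
  · rintro y ⟨hy, hpos⟩ hyC
    obtain ⟨j, hj, hyj⟩ : ∃ j, a j ≠ 0 ∧ y j < ε j := by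
      by_contra! h
      exact hyC ⟨hy, h⟩
    have hlt := lt_neg_sum_mul_log ha hy ((ha j).lt_of_ne' hj) (hpos j hj) hyj
    have hgy : B ≤ g y := hB (mem_image_of_mem g hy)
    change F z₀ < -(∑ k, a k * log (y k)) + g y
    linarith

end NegSumMulLog

theorem log_penalty_minimizer_exists_general
    (K : ℕ) (a : Fin K → ℝ) (ha : ∀ k, 0 ≤ a k)
    (hsum : ∑ k, a k = 1) (lam : ℝ)
    (δ : ℝ) (hδ : 0 < δ) :
    ∃ z ∈ {y : Fin K → ℝ | (∀ k, 0 ≤ y k) ∧ (∑ k, y k = 1) ∧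
            ∀ k, a k ≠ 0 → 0 < y k},
      IsMinOn
        (fun y : Fin K → ℝ =>
          -(∑ k, a k * Real.log (y k)) + lam * ∑ k, Real.log (δ + y k))
        {y : Fin K → ℝ | (∀ k, 0 ≤ y k) ∧ (∑ k, y k = 1) ∧
          ∀ k, a k ≠ 0 → 0 < y k}
        z := by
  have hdomain : {y : Fin K → ℝ | (∀ k, 0 ≤ y k) ∧ (∑ k, y k = 1) ∧ ∀ k, a k ≠ 0 → 0 < y k} =
      stdSimplex ℝ (Fin K) ∩ {y | ∀ k, a k ≠ 0 → 0 < y k} := by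
    ext y
    simp only [stdSimplex, mem_ofPred_eq, mem_inter_iff, and_assoc]
  have hpenalty : ContinuousOn (fun y : Fin K → ℝ => lam * ∑ k, log (δ + y k))
      (stdSimplex ℝ (Fin K)) :=
    continuousOn_const.mul <| continuousOn_finsetSum _ fun k _ =>
      (continuousOn_const.add (continuous_apply k).continuousOn).log fun y hy =>
        (add_pos_of_pos_of_nonneg hδ (hy.1 k)).ne'
  rw [hdomain]
  exact exists_isMinOn_neg_sum_mul_log_add ha hpenalty
    ⟨⟨ha, hsum⟩, fun k hk => (ha k).lt_of_ne' hk⟩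

/-- For `δ > 0`, the objective
`z ↦ -∑ a_k log z_k + λ ∑ log (δ + z_k)`, considered on the part of the
probability simplex where it is finite (i.e. `z_k > 0` whenever `a_k > 0`),
attains its minimum: a global minimizer exists. -/
theorem log_penalty_minimizer_exists
    (K : ℕ) (hK : 0 < K) (a : Fin K → ℝ) (ha : ∀ k, 0 ≤ a k)
    (hsum : ∑ k, a k = 1) (lam : ℝ) (hlam : 0 < lam) (hlamK : lam < 1 / K)
    (δ : ℝ) (hδ : 0 < δ) :
    ∃ z ∈ {y : Fin K → ℝ | (∀ k, 0 ≤ y k) ∧ (∑ k, y k = 1) ∧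
            ∀ k, a k ≠ 0 → 0 < y k},
      IsMinOn
        (fun y : Fin K → ℝ =>
          -(∑ k, a k * Real.log (y k)) + lam * ∑ k, Real.log (δ + y k))
        {y : Fin K → ℝ | (∀ k, 0 ≤ y k) ∧ (∑ k, y k = 1) ∧
          ∀ k, a k ≠ 0 → 0 < y k}
        z :=
  log_penalty_minimizer_exists_general K a ha hsum lam δ hδ
end

section
/- Let A, B ∈ ℝ^{n×n} be symmetric with B positive semi-definite and ker(B) ⊆ ker(A), and let m = n - dim(ker(B)). Then the pair (A, B) has m real generalized eigenvalues, and these are exactly the eigenvalues of B^{-1/2} A B^{-1/2} (Moore–Penrose pseudo-inverse square root), excluding eigenvalues whose eigenvectors lie in ker(B). -/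
/-!
Write `R = B^{1/2}` (`cfc Real.sqrt B`), `S = B^{-1/2}` and `C = S A S`. As functions of `B`,
`R R = B`, `S B = B S = R`, and `P = S R` is the orthogonal projection onto `(ker B)ᗮ`.
Since `ker B ⊆ ker A`, `A P = A`, and by symmetry `P A = A`; hence `A S = R C`. So `C w = μ w`
gives `A (S w) = μ B (S w)`, and conversely `A v = μ B v` gives `C (R v) = μ R v`. For the `m`
eigenpairs, `C` kills `ker B` and therefore preserves `(ker B)ᗮ`, which has dimension `m`: an
orthonormal eigenbasis `w` of `C` there yields `(S wᵢ)ᵀ B (S wⱼ) = wᵢᵀ P wⱼ = wᵢᵀ wⱼ`.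
-/

open Matrix BigOperators

/-- Moore–Penrose pseudo-inverse of the positive semi-definite square root of a
Hermitian (real symmetric) matrix `B`, i.e. `B^{-1/2}` with the convention
`0⁻¹ = 0` on the eigenvalues. -/
noncomputable def pinvSqrt {n : ℕ} (B : Matrix (Fin n) (Fin n) ℝ)
    (hB : B.IsHermitian) : Matrix (Fin n) (Fin n) ℝ :=
  (hB.eigenvectorUnitary : Matrix (Fin n) (Fin n) ℝ) *
    Matrix.diagonal (fun i => (Real.sqrt (hB.eigenvalues i))⁻¹) *
    star (hB.eigenvectorUnitary : Matrix (Fin n) (Fin n) ℝ)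

open Module

theorem Matrix.IsSymm.mulVec_dotProduct {α n : Type*} [CommSemiring α] [Fintype n]
    {M : Matrix n n α} (hM : M.IsSymm) (u v : n → α) : (M *ᵥ u) ⬝ᵥ v = u ⬝ᵥ (M *ᵥ v) := by
  rw [dotProduct_comm, dotProduct_mulVec, ← mulVec_transpose, hM.eq, dotProduct_comm]

theorem Matrix.mul_eq_self_of_ker_le {α l m n : Type*} [CommRing α] [Fintype n]
    {A : Matrix l n α} {B : Matrix m n α} {P : Matrix n n α}
    (hker : ∀ v, B *ᵥ v = 0 → A *ᵥ v = 0) (hBP : B * P = B) : A * P = A := by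
  refine ext_iff_mulVec.mpr fun v => sub_eq_zero.mp ?_
  rw [← mulVec_mulVec, ← mulVec_sub]
  exact hker _ (by rw [mulVec_sub, mulVec_mulVec, hBP, sub_self])

theorem LinearMap.IsSymmetric.exists_orthonormal_eigenvectors_orthogonal
    {𝕜 E : Type*} [RCLike 𝕜] [NormedAddCommGroup E] [InnerProductSpace 𝕜 E]
    [FiniteDimensional 𝕜 E] {T : E →ₗ[𝕜] E} (hT : T.IsSymmetric) {K : Submodule 𝕜 E}
    (hK : ∀ v ∈ K, T v ∈ K) {m : ℕ} (hm : m + finrank 𝕜 K = finrank 𝕜 E) :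
    ∃ (ν : Fin m → ℝ) (w : Fin m → E),
      Orthonormal 𝕜 w ∧ (∀ i, T (w i) = (ν i : 𝕜) • w i) ∧ ∀ i, w i ∈ Kᗮ := by
  have hKperp : ∀ v ∈ Kᗮ, T v ∈ Kᗮ := fun v hv u hu => by
    rw [← hT]; exact hv _ (hK u hu)
  have hfin : finrank 𝕜 Kᗮ = m := by
    have := K.finrank_add_finrank_orthogonal; omega
  have hT' := hT.restrict_invariant hKperp
  refine ⟨hT'.eigenvalues hfin, fun i => hT'.eigenvectorBasis hfin i, ?_, fun i => ?_,
    fun i => (hT'.eigenvectorBasis hfin i).2⟩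
  · exact (hT'.eigenvectorBasis hfin).orthonormal.comp_linearIsometry Kᗮ.subtypeₗᵢ
  · exact congrArg Subtype.val (hT'.apply_eigenvectorBasis hfin i)

theorem Matrix.IsSymm.exists_orthonormal_eigenvectors_orthogonal {ι : Type*} [Fintype ι]
    [DecidableEq ι] {C : Matrix ι ι ℝ} (hC : C.IsSymm) {K : Submodule ℝ (ι → ℝ)}
    (hK : ∀ v ∈ K, C *ᵥ v ∈ K) {m : ℕ} (hm : m + finrank ℝ K = Fintype.card ι) :
    ∃ (ν : Fin m → ℝ) (w : Fin m → ι → ℝ), (∀ i j, w i ⬝ᵥ w j = if i = j then 1 else 0) ∧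
      (∀ i, C *ᵥ w i = ν i • w i) ∧ ∀ i, ∀ v ∈ K, w i ⬝ᵥ v = 0 := by
  let e : (ι → ℝ) ≃ₗ[ℝ] EuclideanSpace ℝ ι := (WithLp.linearEquiv 2 ℝ (ι → ℝ)).symm
  have hT : (toEuclideanLin C).IsSymmetric :=
    isSymmetric_toEuclideanLin_iff.mpr (isHermitian_iff_isSelfAdjoint.mpr hC)
  obtain ⟨ν, w, hw, hTw, hwK⟩ := hT.exists_orthonormal_eigenvectors_orthogonal
    (K := K.map (e : (ι → ℝ) →ₗ[ℝ] EuclideanSpace ℝ ι)) (by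
      rintro _ ⟨v, hv, rfl⟩
      exact ⟨C *ᵥ v, hK v hv, rfl⟩) (m := m)
    (by rw [e.finrank_map_eq, finrank_euclideanSpace, hm])
  refine ⟨ν, fun i => (w i).ofLp, fun i j => ?_, fun i => ?_, fun i v hv => ?_⟩
  · have := orthonormal_iff_ite.mp hw i j
    rwa [EuclideanSpace.inner_eq_star_dotProduct, star_trivial, dotProduct_comm] at this
  · simpa using congrArg WithLp.ofLp (hTw i)
  · have := (Submodule.mem_orthogonal' _ _).mp (hwK i) (e v) ⟨v, hv, rfl⟩
    rwa [EuclideanSpace.inner_eq_star_dotProduct, star_trivial, dotProduct_comm] at this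

theorem Matrix.isSymm_cfc {ι : Type*} [Fintype ι] [DecidableEq ι] (f : ℝ → ℝ)
    (B : Matrix ι ι ℝ) : (cfc f B).IsSymm :=
  isHermitian_iff_isSymm.mp (cfc_predicate f B)

namespace Matrix.PosSemidef

variable {ι : Type*} [Fintype ι] [DecidableEq ι] {B : Matrix ι ι ℝ}

theorem cfc_mul_cfc (hB : B.PosSemidef) {f g h : ℝ → ℝ} (hfgh : ∀ x, 0 ≤ x → f x * g x = h x) :
    cfc f B * cfc g B = cfc h B := by
  rw [← cfc_mul f g B (B.finite_real_spectrum.continuousOn f)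
    (B.finite_real_spectrum.continuousOn g)]
  refine cfc_congr fun x hx => hfgh x ?_
  obtain ⟨i, rfl⟩ := hB.1.spectrum_real_eq_range_eigenvalues ▸ hx
  exact hB.eigenvalues_nonneg i

theorem cfc_sqrt_mul_self (hB : B.PosSemidef) : cfc Real.sqrt B * cfc Real.sqrt B = B := by
  rw [hB.cfc_mul_cfc (f := Real.sqrt) (g := Real.sqrt) (h := id) fun x hx => Real.mul_self_sqrt hx]
  exact cfc_id ℝ B hB.1

theorem dotProduct_mulVec_eq_cfc_sqrt (hB : B.PosSemidef) (x : ι → ℝ) :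
    x ⬝ᵥ (B *ᵥ x) = (cfc Real.sqrt B *ᵥ x) ⬝ᵥ (cfc Real.sqrt B *ᵥ x) := by
  rw [(isSymm_cfc _ B).mulVec_dotProduct, mulVec_mulVec, hB.cfc_sqrt_mul_self]

end Matrix.PosSemidef

section PinvSqrt

variable {n : ℕ} {A B : Matrix (Fin n) (Fin n) ℝ}

theorem pinvSqrt_eq_cfc (hB : B.IsHermitian) : pinvSqrt B hB = cfc (fun x => (√x)⁻¹) B := by
  rw [hB.cfc_eq, IsHermitian.cfc, Unitary.conjStarAlgAut_apply, pinvSqrt]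
  rfl

theorem pinvSqrt_isSymm (hB : B.IsHermitian) : (pinvSqrt B hB).IsSymm := by
  rw [pinvSqrt_eq_cfc]; exact isSymm_cfc _ B

theorem pinvSqrt_mul_self (hB : B.PosSemidef) : pinvSqrt B hB.1 * B = cfc Real.sqrt B := by
  rw [pinvSqrt_eq_cfc]
  nth_rw 2 [← cfc_id' ℝ B hB.1]
  exact hB.cfc_mul_cfc fun x _ => by rw [← div_eq_inv_mul, Real.div_sqrt]

theorem mul_pinvSqrt_self (hB : B.PosSemidef) : B * pinvSqrt B hB.1 = cfc Real.sqrt B := by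
  rw [pinvSqrt_eq_cfc]
  nth_rw 1 [← cfc_id' ℝ B hB.1]
  exact hB.cfc_mul_cfc fun x _ => by rw [← div_eq_mul_inv, Real.div_sqrt]

theorem pinvSqrt_mul_cfc_sqrt_comm (hB : B.PosSemidef) :
    pinvSqrt B hB.1 * cfc Real.sqrt B = cfc Real.sqrt B * pinvSqrt B hB.1 := by
  rw [pinvSqrt_eq_cfc]
  exact (cfc_commute_cfc _ _ B).eq

theorem mul_pinvSqrt_mul_cfc_sqrt (hB : B.PosSemidef) :
    B * (pinvSqrt B hB.1 * cfc Real.sqrt B) = B := by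
  rw [← mul_assoc, mul_pinvSqrt_self hB, hB.cfc_sqrt_mul_self]

theorem cfc_sqrt_mul_pinvSqrt_mul_of_ker_le (hA : A.IsSymm) (hB : B.PosSemidef)
    (hker : ∀ v, B *ᵥ v = 0 → A *ᵥ v = 0) : cfc Real.sqrt B * pinvSqrt B hB.1 * A = A := by
  have h := congrArg transpose (mul_eq_self_of_ker_le hker (mul_pinvSqrt_mul_cfc_sqrt hB))
  rwa [transpose_mul, transpose_mul, hA.eq, (pinvSqrt_isSymm hB.1).eq, (isSymm_cfc _ B).eq] at h

theorem mulVec_pinvSqrt_of_mulVec_eq_smul (hA : A.IsSymm) (hB : B.PosSemidef)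
    (hker : ∀ v, B *ᵥ v = 0 → A *ᵥ v = 0) {μ : ℝ} {w : Fin n → ℝ}
    (hw : (pinvSqrt B hB.1 * A * pinvSqrt B hB.1) *ᵥ w = μ • w) :
    A *ᵥ (pinvSqrt B hB.1 *ᵥ w) = μ • B *ᵥ (pinvSqrt B hB.1 *ᵥ w) := by
  calc A *ᵥ (pinvSqrt B hB.1 *ᵥ w)
      = cfc Real.sqrt B *ᵥ ((pinvSqrt B hB.1 * A * pinvSqrt B hB.1) *ᵥ w) := by
        rw [mulVec_mulVec, mulVec_mulVec, ← mul_assoc, ← mul_assoc,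
          cfc_sqrt_mul_pinvSqrt_mul_of_ker_le hA hB hker]
    _ = μ • B *ᵥ (pinvSqrt B hB.1 *ᵥ w) := by
        rw [hw, mulVec_smul, mulVec_mulVec, mul_pinvSqrt_self hB]

theorem exists_eigenvector_of_generalized_eigenvector (hB : B.PosSemidef)
    (hker : ∀ v, B *ᵥ v = 0 → A *ᵥ v = 0) {μ : ℝ} {v : Fin n → ℝ}
    (hv : A *ᵥ v = μ • B *ᵥ v) (hvB : v ⬝ᵥ B *ᵥ v = 1) :
    ∃ u : Fin n → ℝ, u ≠ 0 ∧
      (pinvSqrt B hB.1 * A * pinvSqrt B hB.1) *ᵥ u = μ • u ∧ B *ᵥ u ≠ 0 := by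
  have hAP := mul_eq_self_of_ker_le hker (mul_pinvSqrt_mul_cfc_sqrt hB)
  have hRR := hB.cfc_sqrt_mul_self
  have hSB := pinvSqrt_mul_self hB
  set S := pinvSqrt B hB.1
  set R := cfc Real.sqrt B
  have hu : (R *ᵥ v) ⬝ᵥ (R *ᵥ v) = 1 := by rw [← hB.dotProduct_mulVec_eq_cfc_sqrt, hvB]
  have hu0 : R *ᵥ v ≠ 0 := fun h => by simp [h] at hu
  refine ⟨R *ᵥ v, hu0, ?_, fun hBu => hu0 ?_⟩
  · rw [mulVec_mulVec, mul_assoc, mul_assoc, hAP, ← mulVec_mulVec, hv, mulVec_smul,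
      mulVec_mulVec, hSB]
  · calc R *ᵥ v = S *ᵥ (R *ᵥ (R *ᵥ v)) := by
          rw [mulVec_mulVec, mulVec_mulVec, mul_assoc, hRR, hSB]
      _ = S *ᵥ (S *ᵥ (B *ᵥ (R *ᵥ v))) := by rw [mulVec_mulVec _ S B, hSB]
      _ = 0 := by rw [hBu, mulVec_zero, mulVec_zero]

theorem exists_generalized_eigenvector_of_eigenvector (hA : A.IsSymm) (hB : B.PosSemidef)
    (hker : ∀ v, B *ᵥ v = 0 → A *ᵥ v = 0) {μ : ℝ} {u : Fin n → ℝ}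
    (hu : (pinvSqrt B hB.1 * A * pinvSqrt B hB.1) *ᵥ u = μ • u) (hBu : B *ᵥ u ≠ 0) :
    ∃ v : Fin n → ℝ, A *ᵥ v = μ • B *ᵥ v ∧ v ⬝ᵥ B *ᵥ v = 1 := by
  have hgen := mulVec_pinvSqrt_of_mulVec_eq_smul hA hB hker hu
  have hBP := mul_pinvSqrt_mul_cfc_sqrt hB
  have hSR := pinvSqrt_mul_cfc_sqrt_comm hB
  set S := pinvSqrt B hB.1
  set R := cfc Real.sqrt B
  set t := (S *ᵥ u) ⬝ᵥ B *ᵥ (S *ᵥ u)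
  have ht : 0 < t := by
    refine lt_of_le_of_ne (hB.dotProduct_mulVec_nonneg _) fun h => hBu ?_
    have hRSu : R *ᵥ (S *ᵥ u) = 0 := by
      rw [← dotProduct_self_eq_zero, ← hB.dotProduct_mulVec_eq_cfc_sqrt]
      exact h.symm
    rw [← hBP, hSR, ← mulVec_mulVec, ← mulVec_mulVec, hRSu, mulVec_zero]
  refine ⟨(√t)⁻¹ • S *ᵥ u, ?_, ?_⟩
  · rw [mulVec_smul, mulVec_smul, hgen, smul_comm]
  · rw [mulVec_smul, smul_dotProduct, dotProduct_smul, smul_smul, smul_eq_mul, ← sq, inv_pow,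
      Real.sq_sqrt ht.le, inv_mul_cancel₀ ht.ne']

theorem exists_orthonormal_generalized_eigenvectors (hA : A.IsSymm) (hB : B.PosSemidef)
    (hker : ∀ v, B *ᵥ v = 0 → A *ᵥ v = 0) {m : ℕ}
    (hm : m + finrank ℝ (LinearMap.ker (toLin' B)) = n) :
    ∃ (lam : Fin m → ℝ) (V : Fin m → Fin n → ℝ),
      (∀ i, A *ᵥ V i = lam i • B *ᵥ V i) ∧
      ∀ i j, V i ⬝ᵥ B *ᵥ V j = if i = j then 1 else 0 := by
  have hS := pinvSqrt_isSymm hB.1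
  have hBS := mul_pinvSqrt_self hB
  have hSB := pinvSqrt_mul_self hB
  have hBP := mul_pinvSqrt_mul_cfc_sqrt hB
  set S := pinvSqrt B hB.1
  set R := cfc Real.sqrt B
  have hC : (S * A * S).IsSymm := by
    rw [IsSymm, transpose_mul, transpose_mul, hS.eq, hA.eq, mul_assoc]
  have hK : ∀ v ∈ LinearMap.ker (toLin' B), (S * A * S) *ᵥ v ∈ LinearMap.ker (toLin' B) := by
    intro v hv
    rw [LinearMap.mem_ker, toLin'_apply] at hv ⊢
    have hSv : B *ᵥ (S *ᵥ v) = 0 := by rw [mulVec_mulVec, hBS, ← hSB, ← mulVec_mulVec, hv,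
      mulVec_zero]
    rw [← mulVec_mulVec, ← mulVec_mulVec, hker _ hSv, mulVec_zero, mulVec_zero]
  obtain ⟨ν, w, hw, hCw, hwK⟩ :=
    hC.exists_orthonormal_eigenvectors_orthogonal hK (by rwa [Fintype.card_fin])
  refine ⟨ν, fun i => S *ᵥ w i,
    fun i => mulVec_pinvSqrt_of_mulVec_eq_smul hA hB hker (hCw i), fun i j => ?_⟩
  have hP : w i ⬝ᵥ (S * R) *ᵥ w j = w i ⬝ᵥ w j := by
    refine (sub_eq_zero.mp ?_).symm
    rw [← dotProduct_sub]
    refine hwK i _ ?_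
    rw [LinearMap.mem_ker, toLin'_apply, mulVec_sub, mulVec_mulVec, hBP, sub_self]
  rw [hS.mulVec_dotProduct, mulVec_mulVec, mulVec_mulVec, mul_assoc, hBS, hP, hw]

end PinvSqrt

/-- If `A, B` are symmetric, `B` is positive semi-definite,
`ker B ⊆ ker A` and `m = n - dim ker B`, then `(A, B)` has `m` real generalized
eigenvalues (there is a `B`-orthonormal family of `m` generalized eigenpairs),
and the generalized eigenvalues of `(A, B)` are exactly the eigenvalues of
`B^{-1/2} A B^{-1/2}` whose eigenvectors do not lie in `ker B`. -/
theorem generalized_eigenvalues_of_singular_B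
    (n m : ℕ) (A B : Matrix (Fin n) (Fin n) ℝ)
    (hA : A.IsSymm) (hB : B.PosSemidef)
    (hker : ∀ v : Fin n → ℝ, B.mulVec v = 0 → A.mulVec v = 0)
    (hm : m + Module.finrank ℝ (LinearMap.ker (Matrix.toLin' B)) = n) :
    (∃ (lam : Fin m → ℝ) (V : Fin m → (Fin n → ℝ)),
        (∀ i, A.mulVec (V i) = lam i • B.mulVec (V i)) ∧
        (∀ i j, V i ⬝ᵥ B.mulVec (V j) = if i = j then 1 else 0)) ∧
    (∀ μ : ℝ,
        (∃ v : Fin n → ℝ, A.mulVec v = μ • B.mulVec v ∧ v ⬝ᵥ B.mulVec v = 1) ↔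
        (∃ u : Fin n → ℝ, u ≠ 0 ∧
          (pinvSqrt B hB.1 * A * pinvSqrt B hB.1).mulVec u = μ • u ∧
          B.mulVec u ≠ 0)) :=
  ⟨exists_orthonormal_generalized_eigenvectors hA hB hker hm, fun _ =>
    ⟨fun ⟨_, hv, hvB⟩ => exists_eigenvector_of_generalized_eigenvector hB hker hv hvB,
      fun ⟨_, _, hu, hBu⟩ => exists_generalized_eigenvector_of_eigenvector hA hB hker hu hBu⟩⟩
end

section
/- Fan's theorem: for a symmetric matrix A ∈ ℝ^{n×n} and K ≤ n, the sum of the K largest eigenvalues of A equals the maximum of Tr(U^T A U) over matrices U ∈ ℝ^{n×K} with U^T U = I_K. -/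
open Matrix BigOperators

/-- Fan's theorem: for a symmetric `A ∈ ℝ^{n×n}` with
eigen-decomposition `A P = P diag μ`, `Pᵀ P = I`, where `μ` is sorted
decreasingly, and `K ≤ n`, the sum of the `K` largest eigenvalues of `A`
equals the maximum of `Tr(Uᵀ A U)` over `U ∈ ℝ^{n×K}` with `Uᵀ U = I`. -/
theorem fan_theorem (n K : ℕ) (hK : K ≤ n)
    (A : Matrix (Fin n) (Fin n) ℝ) (hA : A.IsSymm)
    (μ : Fin n → ℝ) (hμ : Antitone μ)
    (P : Matrix (Fin n) (Fin n) ℝ) (hP : Pᵀ * P = 1)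
    (hAP : A * P = P * Matrix.diagonal μ) :
    IsGreatest
      {t : ℝ | ∃ U : Matrix (Fin n) (Fin K) ℝ, Uᵀ * U = 1 ∧ t = (Uᵀ * A * U).trace}
      (∑ j : Fin K, μ (Fin.castLE hK j)) := by
  have hPPt : P * Pᵀ = 1 := mul_eq_one_comm.mp hP
  have hAeq : A = P * Matrix.diagonal μ * Pᵀ := by
    calc A = A * (P * Pᵀ) := by rw [hPPt, Matrix.mul_one]
    _ = (A * P) * Pᵀ := by rw [Matrix.mul_assoc]
    _ = P * Matrix.diagonal μ * Pᵀ := by rw [hAP]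
  constructor
  · -- membership: take U = first K columns of P
    refine ⟨P.submatrix id (Fin.castLE hK), ?_, ?_⟩
    · ext j j'
      have h1 := congrFun (congrFun hP (Fin.castLE hK j)) (Fin.castLE hK j')
      simp only [Matrix.mul_apply, Matrix.transpose_apply, Matrix.one_apply,
        Matrix.submatrix_apply, id] at h1 ⊢
      rw [h1]
      simp [Fin.castLE_inj]
    · set U := P.submatrix id (Fin.castLE hK) with hU
      have key : ∀ j : Fin K, (Uᵀ * (A * U)) j j = μ (Fin.castLE hK j) := by
        intro j
        have hAU : ∀ i, (A * U) i j = P i (Fin.castLE hK j) * μ (Fin.castLE hK j) := by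
          intro i
          have h2 : (A * U) i j = (A * P) i (Fin.castLE hK j) := by
            simp [Matrix.mul_apply, hU]
          rw [h2, hAP, Matrix.mul_diagonal]
        have h3 : (Uᵀ * (A * U)) j j
            = (∑ i, P i (Fin.castLE hK j) * P i (Fin.castLE hK j)) * μ (Fin.castLE hK j) := by
          rw [Matrix.mul_apply, Finset.sum_mul]
          refine Finset.sum_congr rfl fun i _ => ?_
          rw [Matrix.transpose_apply, hAU i]
          simp only [hU, Matrix.submatrix_apply, id]
          ring
        have h4 := congrFun (congrFun hP (Fin.castLE hK j)) (Fin.castLE hK j)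
        simp only [Matrix.mul_apply, Matrix.transpose_apply, Matrix.one_apply_eq] at h4
        rw [h3, h4, one_mul]
      rw [← Matrix.mul_assoc] at key
      simp only [Matrix.trace, Matrix.diag]
      exact (Finset.sum_congr rfl fun j _ => key j).symm
  · -- upper bound
    rintro t ⟨U, hU, rfl⟩
    rcases Nat.eq_zero_or_pos K with hK0 | hK0
    · subst hK0
      simp [Matrix.trace]
    set W := Pᵀ * U with hWdef
    have hWt : Wᵀ = Uᵀ * P := by
      rw [hWdef, Matrix.transpose_mul, Matrix.transpose_transpose]
    have hWtW : Wᵀ * W = 1 := by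
      rw [hWt, hWdef, Matrix.mul_assoc, ← Matrix.mul_assoc P Pᵀ U, hPPt,
        Matrix.one_mul, hU]
    have htr : Uᵀ * A * U = Wᵀ * Matrix.diagonal μ * W := by
      rw [hAeq, hWt, hWdef]
      simp only [Matrix.mul_assoc]
    set s : Fin n → ℝ := fun i => ∑ j, W i j ^ 2 with hs
    have hs0 : ∀ i, 0 ≤ s i := fun i => Finset.sum_nonneg fun j _ => sq_nonneg _
    have hMdiag : ∀ i, (W * Wᵀ) i i = s i := by
      intro i
      simp [Matrix.mul_apply, hs, sq]
    have hM : (W * Wᵀ) * (W * Wᵀ) = W * Wᵀ := by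
      rw [Matrix.mul_assoc, ← Matrix.mul_assoc Wᵀ W Wᵀ, hWtW, Matrix.one_mul]
    have hs1 : ∀ i, s i ≤ 1 := by
      intro i
      have h2 : (W * Wᵀ) i i = ∑ j, ((W * Wᵀ) i j) ^ 2 := by
        conv_lhs => rw [← hM]
        rw [Matrix.mul_apply]
        refine Finset.sum_congr rfl fun j _ => ?_
        have hsym : (W * Wᵀ) j i = (W * Wᵀ) i j := by
          simp [Matrix.mul_apply, mul_comm]
        rw [hsym, sq]
      have h3 : ((W * Wᵀ) i i) ^ 2 ≤ ∑ j, ((W * Wᵀ) i j) ^ 2 := by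
        exact Finset.single_le_sum (f := fun j => ((W * Wᵀ) i j) ^ 2)
          (fun j _ => sq_nonneg _) (Finset.mem_univ i)
      rw [← h2, hMdiag] at h3
      nlinarith [hs0 i]
    have hsum : ∑ i, s i = (K : ℝ) := by
      have h1 : (Wᵀ * W).trace = (K : ℝ) := by rw [hWtW]; simp
      rw [← h1]
      simp only [Matrix.trace, Matrix.diag, Matrix.mul_apply, Matrix.transpose_apply]
      rw [Finset.sum_comm]
      refine Finset.sum_congr rfl fun i _ => ?_
      simp [hs, sq]
    have htrace : (Uᵀ * A * U).trace = ∑ i, μ i * s i := by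
      rw [htr, Matrix.mul_assoc]
      have hentry : ∀ j : Fin K, (Wᵀ * (Matrix.diagonal μ * W)) j j = ∑ i, μ i * W i j ^ 2 := by
        intro j
        rw [Matrix.mul_apply]
        refine Finset.sum_congr rfl fun i _ => ?_
        rw [Matrix.transpose_apply, Matrix.diagonal_mul]
        ring
      simp only [Matrix.trace, Matrix.diag]
      rw [Finset.sum_congr rfl fun j _ => hentry j, Finset.sum_comm]
      refine Finset.sum_congr rfl fun i _ => ?_
      rw [hs, Finset.mul_sum]
    -- reindexing lemma
    have key : ∀ f : Fin n → ℝ,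
        ∑ j : Fin K, f (Fin.castLE hK j) = ∑ i : Fin n, if (i : ℕ) < K then f i else 0 := by
      intro f
      rw [← Finset.sum_filter]
      refine Finset.sum_bij' (fun (j : Fin K) _ => Fin.castLE hK j)
        (fun (i : Fin n) hi => (⟨(i : ℕ), (Finset.mem_filter.mp hi).2⟩ : Fin K))
        ?_ ?_ ?_ ?_ ?_
      · intro a _
        simp [Fin.castLE]
      · intro b _
        simp
      · intro a _
        simp [Fin.ext_iff]
      · intro b hb
        simp [Fin.ext_iff, Fin.castLE]
      · intro a _
        rfl
    set tt : Fin n → ℝ := fun i => if (i : ℕ) < K then 1 else 0 with htt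
    have htsum : ∑ i, tt i = (K : ℝ) := by
      have := (key fun _ => (1 : ℝ)).symm
      simpa [htt] using this
    have hT : ∑ j : Fin K, μ (Fin.castLE hK j) = ∑ i : Fin n, μ i * tt i := by
      rw [key μ]
      refine Finset.sum_congr rfl fun i _ => ?_
      rw [htt]
      by_cases h : (i : ℕ) < K <;> simp [h]
    have hKn : K - 1 < n := lt_of_lt_of_le (Nat.sub_lt hK0 one_pos) hK
    set c : ℝ := μ ⟨K - 1, hKn⟩ with hc
    have hterm : ∀ i : Fin n, μ i * s i - μ i * tt i ≤ c * (s i - tt i) := by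
      intro i
      rcases lt_or_ge (i : ℕ) K with h | h
      · have ht1 : tt i = 1 := if_pos h
        have hcle : c ≤ μ i := by
          apply hμ
          exact Fin.le_def.mpr (Nat.le_sub_one_of_lt h)
        rw [ht1]
        nlinarith [hs1 i]
      · have ht0 : tt i = 0 := if_neg (not_lt.mpr h)
        have hcge : μ i ≤ c := by
          apply hμ
          exact Fin.le_def.mpr (le_trans (Nat.sub_le K 1) h)
        rw [ht0]
        nlinarith [hs0 i]
    have h1 : ∑ i, (μ i * s i - μ i * tt i) ≤ ∑ i, c * (s i - tt i) :=
      Finset.sum_le_sum fun i _ => hterm i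
    have h2 : ∑ i, c * (s i - tt i) = 0 := by
      rw [← Finset.mul_sum, Finset.sum_sub_distrib, hsum, htsum]
      ring
    rw [Finset.sum_sub_distrib, h2] at h1
    rw [htrace, hT]
    linarith
end
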